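/- Let α > 0, n ≥ 4, and let q_1 > q_2 > … > q_n be real numbers. If there exists an index j with 2 ≤ j ≤ n−2 such that 2(q_j − q_{j+1}) > q_1 − q_n, then there exist no positive masses m_1, …, m_n > 0 and λ < 0 making q a central configuration: the equations λ m_j (q_j − q_0) = −α ∑_{k≠j} m_j m_k Q_{jk} (for all j, with q_0 = (∑_j m_j q_j)/(∑_j m_j)) have no solution with all m_j > 0. -/
import Mathlib
set_option maxHeartbeats 1000000

/-- if some inner gap satisfies `2(q_j − q_{j+1}) > q_1 − q_n`
(with `2 ≤ j ≤ n−2`, 1-based), the inverse problem with positive masses has no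
solution: `q` is not a central configuration for any positive masses and `λ < 0`.
Indices are 0-based in `Fin n`: the paper's `q_j` is `q ⟨j-1,_⟩`. -/
theorem stmt17 (n : ℕ) (hn : 4 ≤ n) (α : ℝ) (hα : 0 < α)
    (q : Fin n → ℝ) (hq : StrictAnti q)
    (Q : Matrix (Fin n) (Fin n) ℝ)
    (hQ : ∀ i j, Q i j = (q i - q j) * |q i - q j| ^ (-α - 2))
    (j : ℕ) (hj1 : 2 ≤ j) (hj2 : j ≤ n - 2)
    (hgap : 2 * (q ⟨j - 1, by omega⟩ - q ⟨j, by omega⟩) >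
      q ⟨0, by omega⟩ - q ⟨n - 1, by omega⟩) :
    ¬ ∃ (m : Fin n → ℝ) (lam : ℝ), (∀ k, 0 < m k) ∧ lam < 0 ∧
      ∀ i, lam * m i * (q i - (∑ k, m k * q k) / (∑ k, m k)) =
        -α * ∑ k ∈ Finset.univ.erase i, m i * m k * Q i k := by
  rintro ⟨m, lam, hm, hlam, heq⟩
  -- the four special indices
  obtain ⟨a, haval⟩ : ∃ a : Fin n, (a : ℕ) = j - 1 := ⟨⟨j - 1, by omega⟩, rfl⟩
  obtain ⟨b, hbval⟩ : ∃ b : Fin n, (b : ℕ) = j := ⟨⟨j, by omega⟩, rfl⟩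
  obtain ⟨f, hfval⟩ : ∃ f : Fin n, (f : ℕ) = 0 := ⟨⟨0, by omega⟩, rfl⟩
  obtain ⟨l, hlval⟩ : ∃ l : Fin n, (l : ℕ) = n - 1 := ⟨⟨n - 1, by omega⟩, rfl⟩
  have hfa : f < a := by rw [Fin.lt_def, hfval, haval]; omega
  have hab' : a < b := by rw [Fin.lt_def, haval, hbval]; omega
  have hbl : b < l := by rw [Fin.lt_def, hbval, hlval]; omega
  have hqfa : q a < q f := hq hfa
  have hqab : q b < q a := hq hab'
  have hqbl : q l < q b := hq hbl
  -- gap and widths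
  obtain ⟨g, hgdef⟩ : ∃ g : ℝ, g = q a - q b := ⟨_, rfl⟩
  obtain ⟨wL, hwLdef⟩ : ∃ w : ℝ, w = q f - q a := ⟨_, rfl⟩
  obtain ⟨wR, hwRdef⟩ : ∃ w : ℝ, w = q b - q l := ⟨_, rfl⟩
  have hg : 0 < g := by rw [hgdef]; linarith
  have hwL : 0 < wL := by rw [hwLdef]; linarith
  have hwR : 0 < wR := by rw [hwRdef]; linarith
  have hgap' : 2 * (q a - q b) > q f - q l := by
    have ea : a = ⟨j - 1, by omega⟩ := Fin.ext (haval.trans rfl)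
    have eb : b = ⟨j, by omega⟩ := Fin.ext (hbval.trans rfl)
    have ef : f = ⟨0, by omega⟩ := Fin.ext (hfval.trans rfl)
    have el : l = ⟨n - 1, by omega⟩ := Fin.ext (hlval.trans rfl)
    rw [ea, eb, ef, el]
    exact hgap
  have hkey : wL + wR < g := by
    rw [hgdef, hwLdef, hwRdef]
    linarith
  -- basic facts about the rpow kernel
  have hanti : ∀ z : ℝ, z ≤ 0 → ∀ d₁ d₂ : ℝ, 0 < d₁ → d₁ ≤ d₂ → d₂ ^ z ≤ d₁ ^ z :=
    fun z hz d₁ d₂ h1 h2 => Real.rpow_le_rpow_of_nonpos h1 h2 hz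
  have hppos : ∀ d : ℝ, 0 < d → 0 < d ^ (-α - 1 : ℝ) :=
    fun d hd => Real.rpow_pos_of_pos hd _
  have hQgt : ∀ i k, q k < q i → Q i k = (q i - q k) ^ (-α - 1 : ℝ) := by
    intro i k h
    have hd : (0:ℝ) < q i - q k := sub_pos.mpr h
    rw [hQ i k, abs_of_pos hd, show (-α - 1 : ℝ) = (-α - 2) + 1 by ring,
      Real.rpow_add_one hd.ne']
    ring
  have hQlt : ∀ i k, q i < q k → Q i k = -((q k - q i) ^ (-α - 1 : ℝ)) := by
    intro i k h
    have hd : (0:ℝ) < q k - q i := sub_pos.mpr h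
    have habs : |q i - q k| = q k - q i := by rw [abs_of_neg (by linarith)]; ring
    rw [hQ i k, habs, show (-α - 1 : ℝ) = (-α - 2) + 1 by ring,
      Real.rpow_add_one hd.ne']
    ring
  have hQdiag : ∀ i, Q i i = 0 := by intro i; rw [hQ i i]; simp
  -- normalized equations
  obtain ⟨q0, hq0⟩ : ∃ c : ℝ, c = (∑ k, m k * q k) / (∑ k, m k) := ⟨_, rfl⟩
  obtain ⟨X, hX⟩ : ∃ x : ℝ, x = -lam / α := ⟨_, rfl⟩
  have hXpos : 0 < X := hX ▸ div_pos (neg_pos.mpr hlam) hα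
  have hS : ∀ i, ∑ k, m k * Q i k = X * (q i - q0) := by
    intro i
    have h0 := heq i
    rw [← hq0] at h0
    have key : ∑ k ∈ Finset.univ.erase i, m i * m k * Q i k
        = m i * ∑ k, m k * Q i k := by
      rw [Finset.mul_sum, ← Finset.sum_erase_add _ _ (Finset.mem_univ i), hQdiag i]
      rw [mul_zero, mul_zero, add_zero]
      exact Finset.sum_congr rfl fun k _ => (mul_assoc _ _ _)
    rw [key] at h0
    have hmi : m i ≠ 0 := (hm i).ne'
    have h3 : lam * (q i - q0) = -α * (∑ k, m k * Q i k) := by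
      apply mul_left_cancel₀ hmi
      linear_combination h0
    rw [hX]
    field_simp
    linarith [h3]
  have hdiff : ∀ i i', ∑ k, m k * (Q i k - Q i' k) = X * (q i - q i') := by
    intro i i'
    have : ∑ k, m k * (Q i k - Q i' k)
        = (∑ k, m k * Q i k) - ∑ k, m k * Q i' k := by
      rw [← Finset.sum_sub_distrib]
      exact Finset.sum_congr rfl fun k _ => by ring
    rw [this, hS i, hS i']
    ring
  -- masses of the two clusters
  set ML : ℝ := ∑ k ∈ Finset.univ.filter (fun k : Fin n => (k : ℕ) < j), m k with hML
  set MR : ℝ := ∑ k ∈ Finset.univ.filter (fun k : Fin n => ¬ ((k : ℕ) < j)), m k with hMR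
  have hMLpos : 0 < ML := by
    apply Finset.sum_pos (fun k _ => hm k)
    exact ⟨a, Finset.mem_filter.mpr ⟨Finset.mem_univ a, by rw [haval]; omega⟩⟩
  have hMRpos : 0 < MR := by
    apply Finset.sum_pos (fun k _ => hm k)
    exact ⟨b, Finset.mem_filter.mpr ⟨Finset.mem_univ b, by rw [hbval]; omega⟩⟩
  -- ordering of q by indices
  have hmono : ∀ k k' : Fin n, (k : ℕ) < (k' : ℕ) → q k' < q k :=
    fun k k' h => hq (Fin.lt_def.mpr h)
  have hmono' : ∀ k k' : Fin n, (k : ℕ) ≤ (k' : ℕ) → q k' ≤ q k :=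
    fun k k' h => hq.antitone (Fin.le_def.mpr h)
  -- Inequality 1 : X * g ≤ (ML + MR) * g ^ (-α-1)
  have hne_ba : b ≠ a := ne_of_gt hab'
  have h1 : X * g ≤ (ML + MR) * g ^ (-α - 1 : ℝ) := by
    have hsum : ∑ k, m k * (Q a k - Q b k) ≤ (m a + m b) * g ^ (-α - 1 : ℝ) := by
      rw [← Finset.sum_erase_add _ _ (Finset.mem_univ a),
        ← Finset.sum_erase_add _ _ (Finset.mem_erase.mpr ⟨hne_ba, Finset.mem_univ b⟩)]
      have hrest : ∑ k ∈ (Finset.univ.erase a).erase b, m k * (Q a k - Q b k) ≤ 0 := by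
        apply Finset.sum_nonpos
        intro k hk
        have hkb : k ≠ b := (Finset.mem_erase.mp hk).1
        have hka : k ≠ a := (Finset.mem_erase.mp (Finset.mem_erase.mp hk).2).1
        apply mul_nonpos_of_nonneg_of_nonpos (hm k).le
        rcases lt_or_ge (k : ℕ) j with hkj | hkj
        · -- k strictly left of a
          have hklta : (k : ℕ) < (a : ℕ) := by
            rw [haval]; rcases Nat.lt_or_ge (k : ℕ) (j-1) with h|h
            · exact h
            · exfalso; exact hka (Fin.ext (by omega))
          have hqa : q a < q k := hmono k a hklta
          have hqb : q b < q k := lt_trans hqab hqa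
          rw [hQlt a k hqa, hQlt b k hqb]
          have := hanti (-α - 1) (by linarith) (q k - q a) (q k - q b)
            (sub_pos.mpr hqa) (by linarith)
          linarith
        · -- k strictly right of b
          have hkgtb : (b : ℕ) < (k : ℕ) := by
            rw [hbval]; rcases Nat.lt_or_ge j (k : ℕ) with h|h
            · exact h
            · exfalso; exact hkb (Fin.ext (by rw [hbval]; omega))
          have hqk : q k < q b := hmono b k hkgtb
          have hqa : q k < q a := lt_trans hqk hqab
          rw [hQgt a k hqa, hQgt b k hqk]
          have := hanti (-α - 1) (by linarith) (q b - q k) (q a - q k)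
            (sub_pos.mpr hqk) (by linarith)
          linarith
      have hterm_b : m b * (Q a b - Q b b) = m b * g ^ (-α - 1 : ℝ) := by
        rw [hQgt a b hqab, hQdiag, hgdef]; ring
      have hterm_a : m a * (Q a a - Q b a) = m a * g ^ (-α - 1 : ℝ) := by
        rw [hQlt b a hqab, hQdiag, hgdef]; ring
      have hexp : (m a + m b) * g ^ (-α - 1 : ℝ)
          = m a * g ^ (-α - 1 : ℝ) + m b * g ^ (-α - 1 : ℝ) := by ring
      rw [hexp]
      linarith [hrest]
    have hma : m a ≤ ML := by
      apply Finset.single_le_sum (fun k _ => (hm k).le)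
      exact Finset.mem_filter.mpr ⟨Finset.mem_univ a, by rw [haval]; omega⟩
    have hmb : m b ≤ MR := by
      apply Finset.single_le_sum (fun k _ => (hm k).le)
      exact Finset.mem_filter.mpr ⟨Finset.mem_univ b, by rw [hbval]; omega⟩
    have : X * g = ∑ k, m k * (Q a k - Q b k) := by rw [hgdef, hdiff a b]
    rw [this]
    have hPg : (0:ℝ) < g ^ (-α - 1 : ℝ) := hppos g hg
    linarith [hsum, mul_le_mul_of_nonneg_right (add_le_add hma hmb) hPg.le]
  -- Inequality 2 : MR * wR^(-α-1) - ML * g^(-α-1) ≤ X * wR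
  have h2 : MR * wR ^ (-α - 1 : ℝ) - ML * g ^ (-α - 1 : ℝ) ≤ X * wR := by
    have hXwR : X * wR = ∑ k, m k * (Q b k - Q l k) := by rw [hwRdef, hdiff b l]
    rw [hXwR, ← Finset.sum_filter_add_sum_filter_not Finset.univ
      (fun k : Fin n => (k : ℕ) < j)]
    have hLbound : ∑ k ∈ Finset.univ.filter (fun k : Fin n => (k : ℕ) < j),
        (-(m k * g ^ (-α - 1 : ℝ)))
        ≤ ∑ k ∈ Finset.univ.filter (fun k : Fin n => (k : ℕ) < j),
        m k * (Q b k - Q l k) := by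
      apply Finset.sum_le_sum
      intro k hk
      have hkj : (k : ℕ) < j := (Finset.mem_filter.mp hk).2
      have hqak : q a ≤ q k := hmono' k a (by rw [haval]; omega)
      have hqbk : q b < q k := lt_of_lt_of_le hqab hqak
      have hqlk : q l < q k := lt_trans hqbl hqbk
      rw [hQlt b k hqbk, hQlt l k hqlk]
      have h1' : (q k - q b) ^ (-α - 1 : ℝ) ≤ g ^ (-α - 1 : ℝ) :=
        hanti (-α - 1) (by linarith) g (q k - q b) hg (by rw [hgdef]; linarith)
      have h2' : 0 < (q k - q l) ^ (-α - 1 : ℝ) := hppos _ (by linarith)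
      linarith [mul_le_mul_of_nonneg_left h1' (hm k).le, mul_nonneg (hm k).le h2'.le]
    have hRbound : ∑ k ∈ Finset.univ.filter (fun k : Fin n => ¬ ((k : ℕ) < j)),
        m k * wR ^ (-α - 1 : ℝ)
        ≤ ∑ k ∈ Finset.univ.filter (fun k : Fin n => ¬ ((k : ℕ) < j)),
        m k * (Q b k - Q l k) := by
      apply Finset.sum_le_sum
      intro k hk
      have hkj : ¬ ((k : ℕ) < j) := (Finset.mem_filter.mp hk).2
      rcases eq_or_ne k b with rfl | hkb
      · rw [hQdiag, hQlt l k (by exact hqbl), hwRdef]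
        linarith
      rcases eq_or_ne k l with rfl | hkl
      · rw [hQgt b k hqbl, hQdiag, hwRdef]
        linarith
      · have hkgtb : (b : ℕ) < (k : ℕ) := by
          rw [hbval]
          rcases Nat.lt_or_ge j (k : ℕ) with h|h
          · exact h
          · exfalso; exact hkb (Fin.ext (by rw [hbval]; omega))
        have hkltl : (k : ℕ) < (l : ℕ) := by
          rw [hlval]
          have : (k : ℕ) < n := k.isLt
          rcases Nat.lt_or_ge (k : ℕ) (n-1) with h|h
          · exact h
          · exfalso; exact hkl (Fin.ext (by rw [hlval]; omega))
        have hqkb : q k < q b := hmono b k hkgtb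
        have hqlk : q l < q k := hmono k l hkltl
        rw [hQgt b k hqkb, hQlt l k hqlk]
        have h1' : wR ^ (-α - 1 : ℝ) ≤ (q b - q k) ^ (-α - 1 : ℝ) :=
          hanti (-α - 1) (by linarith) (q b - q k) wR (sub_pos.mpr hqkb)
            (by rw [hwRdef]; linarith)
        have h2' : 0 < (q k - q l) ^ (-α - 1 : ℝ) := hppos _ (sub_pos.mpr hqlk)
        linarith [mul_le_mul_of_nonneg_left h1' (hm k).le, mul_nonneg (hm k).le h2'.le]
    have hLeq : ∑ k ∈ Finset.univ.filter (fun k : Fin n => (k : ℕ) < j),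
        (-(m k * g ^ (-α - 1 : ℝ))) = -(ML * g ^ (-α - 1 : ℝ)) := by
      rw [hML, Finset.sum_neg_distrib, Finset.sum_mul]
    have hReq : ∑ k ∈ Finset.univ.filter (fun k : Fin n => ¬ ((k : ℕ) < j)),
        m k * wR ^ (-α - 1 : ℝ) = MR * wR ^ (-α - 1 : ℝ) := by
      rw [hMR, Finset.sum_mul]
    linarith [hLbound, hRbound, hLeq.ge, hReq.ge]
  -- Inequality 3 : ML * wL^(-α-1) - MR * g^(-α-1) ≤ X * wL
  have h3 : ML * wL ^ (-α - 1 : ℝ) - MR * g ^ (-α - 1 : ℝ) ≤ X * wL := by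
    have hXwL : X * wL = ∑ k, m k * (Q f k - Q a k) := by rw [hwLdef, hdiff f a]
    rw [hXwL, ← Finset.sum_filter_add_sum_filter_not Finset.univ
      (fun k : Fin n => (k : ℕ) < j)]
    have hLbound : ∑ k ∈ Finset.univ.filter (fun k : Fin n => (k : ℕ) < j),
        m k * wL ^ (-α - 1 : ℝ)
        ≤ ∑ k ∈ Finset.univ.filter (fun k : Fin n => (k : ℕ) < j),
        m k * (Q f k - Q a k) := by
      apply Finset.sum_le_sum
      intro k hk
      have hkj : (k : ℕ) < j := (Finset.mem_filter.mp hk).2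
      rcases eq_or_ne k f with rfl | hkf
      · rw [hQdiag, hQlt a k hqfa, hwLdef]
        linarith
      rcases eq_or_ne k a with rfl | hka
      · rw [hQgt f k hqfa, hQdiag, hwLdef]
        linarith
      · have hkgtf : (f : ℕ) < (k : ℕ) := by
          rw [hfval]
          rcases Nat.eq_zero_or_pos (k : ℕ) with h|h
          · exact absurd (Fin.ext (by rw [hfval]; exact h) : k = f) hkf
          · exact h
        have hklta : (k : ℕ) < (a : ℕ) := by
          rw [haval]
          rcases Nat.lt_or_ge (k : ℕ) (j-1) with h|h
          · exact h
          · exfalso; exact hka (Fin.ext (by rw [haval]; omega))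
        have hqkf : q k < q f := hmono f k hkgtf
        have hqak : q a < q k := hmono k a hklta
        rw [hQgt f k hqkf, hQlt a k hqak]
        have h1' : wL ^ (-α - 1 : ℝ) ≤ (q f - q k) ^ (-α - 1 : ℝ) :=
          hanti (-α - 1) (by linarith) (q f - q k) wL (sub_pos.mpr hqkf)
            (by rw [hwLdef]; linarith)
        have h2' : 0 < (q k - q a) ^ (-α - 1 : ℝ) := hppos _ (sub_pos.mpr hqak)
        linarith [mul_le_mul_of_nonneg_left h1' (hm k).le, mul_nonneg (hm k).le h2'.le]
    have hRbound : ∑ k ∈ Finset.univ.filter (fun k : Fin n => ¬ ((k : ℕ) < j)),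
        (-(m k * g ^ (-α - 1 : ℝ)))
        ≤ ∑ k ∈ Finset.univ.filter (fun k : Fin n => ¬ ((k : ℕ) < j)),
        m k * (Q f k - Q a k) := by
      apply Finset.sum_le_sum
      intro k hk
      have hkj : ¬ ((k : ℕ) < j) := (Finset.mem_filter.mp hk).2
      have hqkb : q k ≤ q b := hmono' b k (by rw [hbval]; omega)
      have hqka : q k < q a := lt_of_le_of_lt hqkb hqab
      have hqkf : q k < q f := lt_trans hqka hqfa
      rw [hQgt f k hqkf, hQgt a k hqka]
      have h1' : (q a - q k) ^ (-α - 1 : ℝ) ≤ g ^ (-α - 1 : ℝ) :=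
        hanti (-α - 1) (by linarith) g (q a - q k) hg (by rw [hgdef]; linarith)
      have h2' : 0 < (q f - q k) ^ (-α - 1 : ℝ) := hppos _ (sub_pos.mpr hqkf)
      linarith [mul_le_mul_of_nonneg_left h1' (hm k).le, mul_nonneg (hm k).le h2'.le]
    have hLeq : ∑ k ∈ Finset.univ.filter (fun k : Fin n => (k : ℕ) < j),
        m k * wL ^ (-α - 1 : ℝ) = ML * wL ^ (-α - 1 : ℝ) := by
      rw [hML, Finset.sum_mul]
    have hReq : ∑ k ∈ Finset.univ.filter (fun k : Fin n => ¬ ((k : ℕ) < j)),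
        (-(m k * g ^ (-α - 1 : ℝ))) = -(MR * g ^ (-α - 1 : ℝ)) := by
      rw [hMR, Finset.sum_neg_distrib, Finset.sum_mul]
    linarith [hLbound, hRbound, hLeq.ge, hReq.ge]
  -- rpow comparisons between gap and widths
  have hPG : (0:ℝ) < g ^ (-α - 1 : ℝ) := hppos g hg
  have hPV : (0:ℝ) < wR ^ (-α - 1 : ℝ) := hppos wR hwR
  have hPU : (0:ℝ) < wL ^ (-α - 1 : ℝ) := hppos wL hwL
  have hwRg : wR ≤ g := by linarith
  have hwLg : wL ≤ g := by linarith
  have hVv : g ^ (-α - 1 : ℝ) * g ≤ wR ^ (-α - 1 : ℝ) * wR := by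
    have e1 : wR ^ (-α - 1 : ℝ) * wR = wR ^ (-α : ℝ) := by
      rw [← Real.rpow_add_one hwR.ne' (-α - 1)]; norm_num
    have e2 : g ^ (-α - 1 : ℝ) * g = g ^ (-α : ℝ) := by
      rw [← Real.rpow_add_one hg.ne' (-α - 1)]; norm_num
    rw [e1, e2]
    exact hanti (-α) (by linarith) wR g hwR hwRg
  have hUu : g ^ (-α - 1 : ℝ) * g ≤ wL ^ (-α - 1 : ℝ) * wL := by
    have e1 : wL ^ (-α - 1 : ℝ) * wL = wL ^ (-α : ℝ) := by
      rw [← Real.rpow_add_one hwL.ne' (-α - 1)]; norm_num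
    have e2 : g ^ (-α - 1 : ℝ) * g = g ^ (-α : ℝ) := by
      rw [← Real.rpow_add_one hg.ne' (-α - 1)]; norm_num
    rw [e1, e2]
    exact hanti (-α) (by linarith) wL g hwL hwLg
  -- scalar endgame
  -- key1 : MR * g^2 ≤ ML * (wR*g) + (ML+MR) * wR^2   (after dividing by (g ^ (-α - 1 : ℝ)))
  have key1 : MR * g^2 ≤ ML * (wR * g) + (ML + MR) * wR^2 := by
    have t1 : MR * (wR ^ (-α - 1 : ℝ)) * (wR * g) ≤ (ML * (g ^ (-α - 1 : ℝ)) + X * wR) * (wR * g) := by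
      apply mul_le_mul_of_nonneg_right _ (by positivity)
      linarith [h2]
    have t2 : MR * ((g ^ (-α - 1 : ℝ)) * g) * g ≤ MR * ((wR ^ (-α - 1 : ℝ)) * wR) * g := by
      apply mul_le_mul_of_nonneg_right _ hg.le
      exact mul_le_mul_of_nonneg_left hVv hMRpos.le
    have t3 : X * g * wR^2 ≤ (ML + MR) * (g ^ (-α - 1 : ℝ)) * wR^2 :=
      mul_le_mul_of_nonneg_right h1 (sq_nonneg wR)
    have hmul : MR * g^2 * (g ^ (-α - 1 : ℝ)) ≤ (ML * (wR * g) + (ML + MR) * wR^2) * (g ^ (-α - 1 : ℝ)) := by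
      linarith [t1, t2, t3]
    exact le_of_mul_le_mul_right hmul hPG
  have key2 : ML * g^2 ≤ MR * (wL * g) + (ML + MR) * wL^2 := by
    have t1 : ML * (wL ^ (-α - 1 : ℝ)) * (wL * g) ≤ (MR * (g ^ (-α - 1 : ℝ)) + X * wL) * (wL * g) := by
      apply mul_le_mul_of_nonneg_right _ (by positivity)
      linarith [h3]
    have t2 : ML * ((g ^ (-α - 1 : ℝ)) * g) * g ≤ ML * ((wL ^ (-α - 1 : ℝ)) * wL) * g := by
      apply mul_le_mul_of_nonneg_right _ hg.le
      exact mul_le_mul_of_nonneg_left hUu hMLpos.le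
    have t3 : X * g * wL^2 ≤ (ML + MR) * (g ^ (-α - 1 : ℝ)) * wL^2 :=
      mul_le_mul_of_nonneg_right h1 (sq_nonneg wL)
    have hmul : ML * g^2 * (g ^ (-α - 1 : ℝ)) ≤ (MR * (wL * g) + (ML + MR) * wL^2) * (g ^ (-α - 1 : ℝ)) := by
      linarith [t1, t2, t3]
    exact le_of_mul_le_mul_right hmul hPG
  have e1 : MR * (g - wR) ≤ ML * wR := by
    have h : MR * (g - wR) * (g + wR) ≤ ML * wR * (g + wR) := by linarith [key1]
    exact le_of_mul_le_mul_right h (by linarith)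
  have e2 : ML * (g - wL) ≤ MR * wL := by
    have h : ML * (g - wL) * (g + wL) ≤ MR * wL * (g + wL) := by linarith [key2]
    exact le_of_mul_le_mul_right h (by linarith)
  have e3 : (MR * (g - wR)) * (ML * (g - wL)) ≤ (ML * wR) * (MR * wL) :=
    mul_le_mul e1 e2 (mul_nonneg hMLpos.le (by linarith)) (mul_nonneg hMLpos.le hwR.le)
  have hgap2 : 0 < g - (wL + wR) := by linarith
  linarith [e3, mul_pos (mul_pos hMLpos hMRpos) (mul_pos hg hgap2)]
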